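/- Let ℳ_L be an L-layer ReLU representation with L > 3 and let θ = [θ_1;…;θ_{L-1}] be a configuration. Assume every column of W_L has Euclidean norm 1, every row of W_1 has Euclidean norm 1, and let C be the maximum of the absolute values of all entries of W_2,…,W_{L-1}. Then for all x_1, x_2 ∈ R^θ, ‖ℳ_L^θ(x_1) − ℳ_L^θ(x_2)‖_2 ≤ C^{L-2} · (Π_{k=1}^{L-1} |spt θ_k|) · ‖x_1 − x_2‖_2. -/

import Mathlib

open Matrix

noncomputable section

/-- Componentwise rectifier `ρ(y)_i = max (0, y_i)`. -/
def relu {n : ℕ} (y : Fin n → ℝ) : Fin n → ℝ := fun i => max 0 (y i)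

/-- Multiplication of a vector by the diagonal matrix `diag θ`. -/
def mask {n : ℕ} (θ y : Fin n → ℝ) : Fin n → ℝ := fun i => θ i * y i

/-- The pre-activations of an `L`-layer ReLU representation with widths `N 0, N 1, …`,
weight matrices `W k : ℝ^{N (k+1) × N k}` (so `W k` is the paper's `W_{k+1}`) and biases
`b k` (the paper's `b_{k+1}`):  `preact N W b k x = M_{k+2-1+1}… `, i.e.
`preact N W b k = M_{k+1} ∘ ρ ∘ M_k ∘ ⋯ ∘ ρ ∘ M_1` in the paper's notation, so that the
ReLU representation is `ℳ_L = preact N W b (L-1)`. -/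
def preact (N : ℕ → ℕ) (W : ∀ k, Matrix (Fin (N (k + 1))) (Fin (N k)) ℝ)
    (b : ∀ k, Fin (N (k + 1)) → ℝ) : (k : ℕ) → (Fin (N 0) → ℝ) → Fin (N (k + 1)) → ℝ
  | 0, x => W 0 *ᵥ x + b 0
  | k + 1, x => W (k + 1) *ᵥ relu (preact N W b k x) + b (k + 1)

/-- The affine map induced by the configuration `θ`, where `θ k : ℝ^{N (k+1)}` is the
paper's `θ_{k+1}`:  `linpass N W b θ k = M_{k+1} ∘ diag(θ_k) ∘ ⋯ ∘ diag(θ_1) ∘ M_1`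
in the paper's notation, so `ℳ_L^θ = linpass N W b θ (L-1)`. -/
def linpass (N : ℕ → ℕ) (W : ∀ k, Matrix (Fin (N (k + 1))) (Fin (N k)) ℝ)
    (b : ∀ k, Fin (N (k + 1)) → ℝ) (θ : ∀ k, Fin (N (k + 1)) → ℝ) :
    (k : ℕ) → (Fin (N 0) → ℝ) → Fin (N (k + 1)) → ℝ
  | 0, x => W 0 *ᵥ x + b 0
  | k + 1, x => W (k + 1) *ᵥ mask (θ k) (linpass N W b θ k x) + b (k + 1)

/-- The region `R^θ` determined by the first `m` activation layers: the paper's layer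
input `y_{k+1} = M_{k+1} diag(θ_k) ⋯ diag(θ_1) M_1 x = linpass N W b θ k x` must be
positive in the coordinates where `θ_{k+1} = θ k` equals `1`, and nonpositive where it
equals `0`, for all `k < m`.  For an `L`-layer representation, `R^θ = region N W b θ (L-1)`. -/
def region (N : ℕ → ℕ) (W : ∀ k, Matrix (Fin (N (k + 1))) (Fin (N k)) ℝ)
    (b : ∀ k, Fin (N (k + 1)) → ℝ) (θ : ∀ k, Fin (N (k + 1)) → ℝ) (m : ℕ) :
    Set (Fin (N 0) → ℝ) :=
  {x | ∀ k < m, ∀ i, (θ k i = 1 → 0 < linpass N W b θ k x i) ∧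
      (θ k i = 0 → linpass N W b θ k x i ≤ 0)}

/-- The Euclidean norm `‖x‖₂ = √(∑ i, x i ^ 2)` on `Fin n → ℝ`. -/
noncomputable def e2norm {n : ℕ} (x : Fin n → ℝ) : ℝ := Real.sqrt (∑ i, (x i) ^ 2)

/-- The cardinality `|spt θ|` of the support `{i : θ i = 1}`. -/
noncomputable def sptCard {n : ℕ} (θ : Fin n → ℝ) : ℕ := Nat.card {i // θ i = 1}

lemma abs_sum_mul_le {n : ℕ} (a d : Fin n → ℝ) :
    |∑ j, a j * d j| ≤ e2norm a * e2norm d := by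
  have h1 : |∑ j, a j * d j| ≤ ∑ j, |a j| * |d j| := by
    refine (Finset.abs_sum_le_sum_abs _ _).trans ?_
    simp [abs_mul, le_refl]
  refine h1.trans ?_
  have := Real.sum_mul_le_sqrt_mul_sqrt Finset.univ (fun j => |a j|) (fun j => |d j|)
  simpa [e2norm, sq_abs] using this

lemma e2norm_nonneg {n : ℕ} (x : Fin n → ℝ) : 0 ≤ e2norm x := Real.sqrt_nonneg _

lemma sptCard_eq {n : ℕ} (θ : Fin n → ℝ) :
    sptCard θ = (Finset.univ.filter (fun i => θ i = 1)).card := by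
  rw [sptCard, Nat.card_eq_fintype_card, Fintype.card_subtype]

lemma masked_sum_le {n : ℕ} (θ u : Fin n → ℝ) (hθ : ∀ i, θ i = 0 ∨ θ i = 1)
    (B : ℝ) (hB : ∀ i, |u i| ≤ B) : ∑ j, |θ j * u j| ≤ (sptCard θ : ℝ) * B := by
  have h1 : ∑ j, |θ j * u j| = ∑ j ∈ Finset.univ.filter (fun j => θ j = 1), |u j| := by
    rw [Finset.sum_filter]
    refine Finset.sum_congr rfl fun j _ => ?_
    rcases hθ j with h | h <;> simp [h]
  rw [h1, sptCard_eq]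
  calc ∑ j ∈ Finset.univ.filter (fun j => θ j = 1), |u j|
      ≤ (Finset.univ.filter (fun j : Fin n => θ j = 1)).card • B :=
        Finset.sum_le_card_nsmul _ _ B fun j _ => hB j
    _ = _ := by simp [nsmul_eq_mul]

lemma e2norm_eq {n : ℕ} (x : Fin n → ℝ) :
    e2norm x = ‖(WithLp.equiv 2 (Fin n → ℝ)).symm x‖ := by
  rw [EuclideanSpace.norm_eq]
  simp [e2norm, sq_abs]

lemma e2norm_mulVec_le {n m : ℕ} (A : Matrix (Fin m) (Fin n) ℝ) (u : Fin n → ℝ)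
    (h : ∀ j, e2norm (fun i => A i j) = 1) :
    e2norm (A *ᵥ u) ≤ ∑ j, |u j| := by
  have h0 : A *ᵥ u = ∑ j, u j • (fun i => A i j) := by
    funext i
    simp [mulVec, dotProduct, Finset.sum_apply, mul_comm]
  have key : (WithLp.equiv 2 (Fin m → ℝ)).symm (A *ᵥ u)
      = ∑ j, u j • (WithLp.equiv 2 (Fin m → ℝ)).symm (fun i => A i j) := by
    rw [h0, WithLp.equiv_symm_apply, WithLp.toLp_sum]
    simp [WithLp.linearEquiv_symm_apply]
  rw [e2norm_eq, key]
  refine (norm_sum_le _ _).trans ?_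
  refine Finset.sum_le_sum fun j _ => ?_
  rw [norm_smul, ← e2norm_eq, h j]
  simp

/-- Let `θ` be a configuration of an `L`-layer ReLU representation with
`L > 3` (here `L = M + 4`; `W k` is the paper's `W_{k+1}`, `θ k` the paper's `θ_{k+1}`).
If every column of `W_L` and every row of `W_1` has Euclidean norm `1`, and `C` bounds the
absolute values of all entries of `W_2, …, W_{L-1}`, then for all `x₁, x₂ ∈ R^θ`:
`‖ℳ_L^θ(x₁) − ℳ_L^θ(x₂)‖₂ ≤ C^{L-2} ⬝ (∏_{k=1}^{L-1} |spt θ_k|) ⬝ ‖x₁ − x₂‖₂`. -/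
theorem lipschitz_bound_on_region
    (M : ℕ) (N : ℕ → ℕ)
    (W : ∀ k, Matrix (Fin (N (k + 1))) (Fin (N k)) ℝ)
    (b : ∀ k, Fin (N (k + 1)) → ℝ)
    (θ : ∀ k, Fin (N (k + 1)) → ℝ)
    (hθ : ∀ k i, θ k i = 0 ∨ θ k i = 1)
    (hconf : (region N W b θ (M + 3)).Nonempty)
    (hcol : ∀ i, e2norm (fun j => W (M + 3) j i) = 1)
    (hrow : ∀ i, e2norm (W 0 i) = 1)
    (C : ℝ) (hC : 0 ≤ C)
    (hCW : ∀ k, 1 ≤ k → k ≤ M + 2 → ∀ i j, |W k i j| ≤ C)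
    (x₁ x₂ : Fin (N 0) → ℝ)
    (hx₁ : x₁ ∈ region N W b θ (M + 3)) (hx₂ : x₂ ∈ region N W b θ (M + 3)) :
    e2norm (linpass N W b θ (M + 3) x₁ - linpass N W b θ (M + 3) x₂)
      ≤ C ^ (M + 2) * (∏ k ∈ Finset.range (M + 3), (sptCard (θ k) : ℝ))
          * e2norm (x₁ - x₂) := by
  have key : ∀ k, k ≤ M + 2 → ∀ i,
      |linpass N W b θ k x₁ i - linpass N W b θ k x₂ i|
        ≤ C ^ k * (∏ j ∈ Finset.range k, (sptCard (θ j) : ℝ)) * e2norm (x₁ - x₂) := by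
    intro k
    induction k with
    | zero =>
      intro _ i
      have h0 : linpass N W b θ 0 x₁ i - linpass N W b θ 0 x₂ i
          = ∑ j, W 0 i j * (x₁ - x₂) j := by
        simp [linpass, mulVec, dotProduct, ← Finset.sum_sub_distrib, mul_sub, Pi.sub_apply]
      rw [h0]
      simpa [hrow i] using abs_sum_mul_le (W 0 i) (x₁ - x₂)
    | succ k ih =>
      intro hk i
      have hk' : k ≤ M + 2 := Nat.le_of_succ_le hk
      have hdiff : linpass N W b θ (k + 1) x₁ i - linpass N W b θ (k + 1) x₂ i
          = ∑ j, W (k + 1) i j *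
              (θ k j * (linpass N W b θ k x₁ j - linpass N W b θ k x₂ j)) := by
        simp only [linpass, mulVec, dotProduct, Pi.add_apply, mask]
        rw [add_sub_add_right_eq_sub, ← Finset.sum_sub_distrib]
        exact Finset.sum_congr rfl fun j _ => by ring
      rw [hdiff]
      have step1 : |∑ j, W (k + 1) i j *
            (θ k j * (linpass N W b θ k x₁ j - linpass N W b θ k x₂ j))|
          ≤ C * ∑ j, |θ k j * (linpass N W b θ k x₁ j - linpass N W b θ k x₂ j)| := by
        refine (Finset.abs_sum_le_sum_abs _ _).trans ?_
        rw [Finset.mul_sum]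
        refine Finset.sum_le_sum fun j _ => ?_
        rw [abs_mul]
        exact mul_le_mul_of_nonneg_right (hCW (k + 1) (Nat.one_le_iff_ne_zero.mpr (Nat.succ_ne_zero k)) hk i j) (abs_nonneg _)
      refine step1.trans ?_
      have step2 : ∑ j, |θ k j * (linpass N W b θ k x₁ j - linpass N W b θ k x₂ j)|
          ≤ (sptCard (θ k) : ℝ) *
              (C ^ k * (∏ j ∈ Finset.range k, (sptCard (θ j) : ℝ)) * e2norm (x₁ - x₂)) :=
        masked_sum_le _ _ (hθ k) _ (ih hk')
      calc C * ∑ j, |θ k j * (linpass N W b θ k x₁ j - linpass N W b θ k x₂ j)|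
          ≤ C * ((sptCard (θ k) : ℝ) *
              (C ^ k * (∏ j ∈ Finset.range k, (sptCard (θ j) : ℝ)) * e2norm (x₁ - x₂))) :=
            mul_le_mul_of_nonneg_left step2 hC
        _ = C ^ (k + 1) * (∏ j ∈ Finset.range (k + 1), (sptCard (θ j) : ℝ)) * e2norm (x₁ - x₂) := by
            rw [Finset.prod_range_succ]; ring
  have hfin : linpass N W b θ (M + 3) x₁ - linpass N W b θ (M + 3) x₂
      = W (M + 3) *ᵥ mask (θ (M + 2))
          (linpass N W b θ (M + 2) x₁ - linpass N W b θ (M + 2) x₂) := by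
    funext i
    simp only [Pi.sub_apply, linpass, mulVec, dotProduct, Pi.add_apply, mask]
    rw [add_sub_add_right_eq_sub, ← Finset.sum_sub_distrib]
    exact Finset.sum_congr rfl fun j _ => by ring
  rw [hfin]
  have h1 := e2norm_mulVec_le (W (M + 3))
      (mask (θ (M + 2)) (linpass N W b θ (M + 2) x₁ - linpass N W b θ (M + 2) x₂)) hcol
  refine h1.trans ?_
  have h2 : ∑ j, |mask (θ (M + 2))
        (linpass N W b θ (M + 2) x₁ - linpass N W b θ (M + 2) x₂) j|
      ≤ (sptCard (θ (M + 2)) : ℝ) *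
          (C ^ (M + 2) * (∏ j ∈ Finset.range (M + 2), (sptCard (θ j) : ℝ)) * e2norm (x₁ - x₂)) := by
    have := masked_sum_le (θ (M + 2))
        (linpass N W b θ (M + 2) x₁ - linpass N W b θ (M + 2) x₂) (hθ (M + 2)) _
        (fun i => by simpa using key (M + 2) le_rfl i)
    simpa [mask] using this
  refine h2.trans (le_of_eq ?_)
  rw [show (∏ k ∈ Finset.range (M + 3), (sptCard (θ k) : ℝ))
      = (∏ k ∈ Finset.range (M + 2), (sptCard (θ k) : ℝ)) * sptCard (θ (M + 2)) from
    Finset.prod_range_succ _ _]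
  ring
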